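/- Let a > b > 0, c² = a² − b², and t ∈ ℝ. For the triangle P₁P₂P₃ of the incircle family with P₁ = (a·cos t, b·sin t), P₂ = w₂·(a²·cos t − w₁·sin t, b²·sin t + w₁·cos t), P₃ = w₂·(a²·cos t + w₁·sin t, b²·sin t − w₁·cos t), where w₁ = sqrt(c²(a+b)²·cos²t + 2ab³ + b⁴) and w₂ = −ab/((c²·cos²t + b²)(a+b)), the cosine of the interior angle at P₁ equals ((a⁴ + 2a³b − 2ab³ − b⁴)·cos²t − a²b² + 2ab³ + b⁴) / ((a+b)²·(c²·cos²t + b²)). -/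

import Mathlib

/-!
Put `E = |OP₁|² = a² cos² t + b² sin² t` and `r = ab/(a+b)`. The claimed cosine is `1 - 2r²/E`,
as it must be: the sides through `P₁` touch the circle of radius `r` about the centre, so
`sin (∠P₁/2) = r/|OP₁|`. The proof computes instead. Multiplied by `-(a+b)E`, the edge vectors at
`P₁` have inner product `E N Q` and cross product `-2abw₁EQ`, where `N = (a+b)²E - 2a²b²`,
`Q = E + 2ab` and `w₁² = (a+b)²E - a²b²`. As `N² + 4a²b²w₁² = ((a+b)²E)²`, Lagrange's identity
makes the product of their lengths `EQ(a+b)²E`.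
-/

open EuclideanGeometry

/-- The point of the plane with coordinates `(x, y)`. -/
noncomputable def pt (x y : ℝ) : EuclideanSpace ℝ (Fin 2) := WithLp.toLp 2 ![x, y]

open InnerProductGeometry
open scoped RealInnerProductSpace

lemma pt_vsub_pt (x₁ y₁ x₂ y₂ : ℝ) : pt x₁ y₁ -ᵥ pt x₂ y₂ = pt (x₁ - x₂) (y₁ - y₂) := by
  ext i
  fin_cases i <;> simp [pt, vsub_eq_sub]

lemma smul_pt (r x y : ℝ) : r • pt x y = pt (r * x) (r * y) := by
  ext i
  fin_cases i <;> simp [pt]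

lemma inner_pt_pt (x₁ y₁ x₂ y₂ : ℝ) : ⟪pt x₁ y₁, pt x₂ y₂⟫ = x₁ * x₂ + y₁ * y₂ := by
  simp [pt, PiLp.inner_apply, Fin.sum_univ_two, mul_comm]

lemma norm_sq_mul_norm_sq_pt (x₁ y₁ x₂ y₂ : ℝ) :
    ‖pt x₁ y₁‖ ^ 2 * ‖pt x₂ y₂‖ ^ 2 = (x₁ * x₂ + y₁ * y₂) ^ 2 + (x₁ * y₂ - y₁ * x₂) ^ 2 := by
  simp only [← real_inner_self_eq_norm_sq, inner_pt_pt]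
  ring

theorem InnerProductGeometry.cos_angle_of_norm_sq_mul_norm_sq {V : Type*}
    [NormedAddCommGroup V] [InnerProductSpace ℝ V] {x y : V} {ρ : ℝ} (hρ : 0 ≤ ρ)
    (h : ‖x‖ ^ 2 * ‖y‖ ^ 2 = ρ ^ 2) : Real.cos (angle x y) = ⟪x, y⟫ / ρ := by
  have hnorm : ‖x‖ * ‖y‖ = ρ := (sq_eq_sq₀ (by positivity) hρ).1 (by rw [mul_pow, h])
  rw [cos_angle, hnorm]

lemma cos_angle_pt_pt {x₁ y₁ x₂ y₂ ρ : ℝ} (hρ : 0 ≤ ρ)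
    (h : (x₁ * x₂ + y₁ * y₂) ^ 2 + (x₁ * y₂ - y₁ * x₂) ^ 2 = ρ ^ 2) :
    Real.cos (angle (pt x₁ y₁) (pt x₂ y₂)) = (x₁ * x₂ + y₁ * y₂) / ρ := by
  rw [cos_angle_of_norm_sq_mul_norm_sq hρ (by rw [norm_sq_mul_norm_sq_pt, h]), inner_pt_pt]

section IncircleFamily

variable {a b C S E w α β : ℝ}

lemma cos_angle_incircle_scaled_edges (ha : 0 < a) (hb : 0 < b) (hCS : C ^ 2 + S ^ 2 = 1)
    (hE : E = a ^ 2 * C ^ 2 + b ^ 2 * S ^ 2) (hw : w ^ 2 = (a + b) ^ 2 * E - a ^ 2 * b ^ 2)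
    (hα : α = a * (a ^ 2 * b + (a + b) * E)) (hβ : β = b * (a * b ^ 2 + (a + b) * E)) :
    Real.cos (angle (pt (α * C - a * b * w * S) (β * S + a * b * w * C))
        (pt (α * C + a * b * w * S) (β * S - a * b * w * C))) =
      ((a + b) ^ 2 * E - 2 * a ^ 2 * b ^ 2) / ((a + b) ^ 2 * E) := by
  have hE₀ : 0 < E := by
    rw [hE]; nlinarith [mul_pos ha hb, sq_nonneg (a * C), sq_nonneg (b * S)]
  have h_inner : (α * C - a * b * w * S) * (α * C + a * b * w * S)
      + (β * S + a * b * w * C) * (β * S - a * b * w * C)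
      = E * ((a + b) ^ 2 * E - 2 * a ^ 2 * b ^ 2) * (E + 2 * a * b) := by
    subst hα hβ hE
    linear_combination -(2 * a ^ 3 * b ^ 3 * (a ^ 2 * C ^ 2 + b ^ 2 * S ^ 2) + a ^ 4 * b ^ 4
      + a ^ 2 * b ^ 2 * w ^ 2) * hCS - a ^ 2 * b ^ 2 * hw
  have h_cross : (α * C - a * b * w * S) * (β * S - a * b * w * C)
      - (β * S + a * b * w * C) * (α * C + a * b * w * S)
      = -2 * a * b * w * E * (E + 2 * a * b) := by
    subst hα hβ hE
    linear_combination -2 * a ^ 2 * b ^ 2 * w * (a ^ 2 * C ^ 2 + b ^ 2 * S ^ 2) * hCS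
  rw [cos_angle_pt_pt (ρ := E * (E + 2 * a * b) * ((a + b) ^ 2 * E)) (by positivity), h_inner]
  · field_simp
  · rw [h_inner, h_cross]
    linear_combination 4 * a ^ 2 * b ^ 2 * E ^ 2 * (E + 2 * a * b) ^ 2 * hw

end IncircleFamily

theorem incircle_family_cosine_at_P1 (a b c t : ℝ) (hb : 0 < b) (hab : b < a)
    (hc : c ^ 2 = a ^ 2 - b ^ 2)
    (w₁ w₂ : ℝ)
    (hw₁ : w₁ = Real.sqrt (c ^ 2 * (a + b) ^ 2 * Real.cos t ^ 2 + 2 * a * b ^ 3 + b ^ 4))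
    (hw₂ : w₂ = -(a * b) / ((c ^ 2 * Real.cos t ^ 2 + b ^ 2) * (a + b)))
    (P₁ P₂ P₃ : EuclideanSpace ℝ (Fin 2))
    (hP₁ : P₁ = pt (a * Real.cos t) (b * Real.sin t))
    (hP₂ : P₂ = pt (w₂ * (a ^ 2 * Real.cos t - w₁ * Real.sin t))
                   (w₂ * (b ^ 2 * Real.sin t + w₁ * Real.cos t)))
    (hP₃ : P₃ = pt (w₂ * (a ^ 2 * Real.cos t + w₁ * Real.sin t))
                   (w₂ * (b ^ 2 * Real.sin t - w₁ * Real.cos t))) :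
    Real.cos (∠ P₂ P₁ P₃) =
      ((a ^ 4 + 2 * a ^ 3 * b - 2 * a * b ^ 3 - b ^ 4) * Real.cos t ^ 2
          - a ^ 2 * b ^ 2 + 2 * a * b ^ 3 + b ^ 4) /
        ((a + b) ^ 2 * (c ^ 2 * Real.cos t ^ 2 + b ^ 2)) := by
  have ha : 0 < a := hb.trans hab
  have hCS := Real.cos_sq_add_sin_sq t
  set C := Real.cos t
  set S := Real.sin t
  set E := a ^ 2 * C ^ 2 + b ^ 2 * S ^ 2 with hE
  have hcE : c ^ 2 * C ^ 2 + b ^ 2 = E := by rw [hc]; linear_combination -b ^ 2 * hCS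
  have hE₀ : 0 < E := hcE ▸ by positivity
  have hw : w₁ ^ 2 = (a + b) ^ 2 * E - a ^ 2 * b ^ 2 := by
    rw [hw₁, Real.sq_sqrt (by positivity), ← hcE]; ring
  have h₂ : P₂ -ᵥ P₁ = (-((a + b) * E)⁻¹) • pt (a * (a ^ 2 * b + (a + b) * E) * C - a * b * w₁ * S)
      (b * (a * b ^ 2 + (a + b) * E) * S + a * b * w₁ * C) := by
    rw [hP₂, hP₁, pt_vsub_pt, smul_pt, hw₂, hcE]
    congr 1 <;> field_simp <;> ring
  have h₃ : P₃ -ᵥ P₁ = (-((a + b) * E)⁻¹) • pt (a * (a ^ 2 * b + (a + b) * E) * C + a * b * w₁ * S)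
      (b * (a * b ^ 2 + (a + b) * E) * S - a * b * w₁ * C) := by
    rw [hP₃, hP₁, pt_vsub_pt, smul_pt, hw₂, hcE]
    congr 1 <;> field_simp <;> ring
  rw [EuclideanGeometry.angle, h₂, h₃, angle_smul_smul (neg_ne_zero.2 (by positivity)),
    cos_angle_incircle_scaled_edges ha hb hCS hE hw rfl rfl, ← hcE, hc]
  ring
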